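/- arXiv:2001.08417 — 5 statements merged into one kernel-verified Lean document; each statement's English description precedes it below -/
import Mathlib

section
/- (Type A.1) Let π ∈ S_n and let w_1 = π_a and w_2 = π_b with 1 ≤ a ≤ b ≤ n. Suppose w_1 ∈ A_π(v_i, y_i) and w_2 ∈ D_π(y_j, v_{j+1}) with i ≤ j, and suppose: if Next_π(w_2) ≠ v_{j+1} then w_1 > Next_π(w_2), and if Prec_π(w_1) ≠ v_i then w_2 > Prec_π(w_1). Then the reversal ρ(w_1, w_2) is balanced for π. -/
/-- The block reversal: reverses the block of `π` between positions `a` and `b`. -/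
def rev (π : ℕ → ℕ) (a b : ℕ) : ℕ → ℕ := fun i =>
  if a ≤ i ∧ i ≤ b then π (a + b - i) else π i

/-- Position `i` holds a pinnacle: `π (i-1) < π i > π (i+1)`. -/
def PinAt (π : ℕ → ℕ) (i : ℕ) : Prop := π (i - 1) < π i ∧ π (i + 1) < π i

/-- Position `i` holds a dell: `π (i-1) > π i < π (i+1)`. -/
def DellAt (π : ℕ → ℕ) (i : ℕ) : Prop := π i < π (i - 1) ∧ π i < π (i + 1)

/-- Position `i` is ascending: its element belongs to an ascending set of `π`. -/
def AscAt (π : ℕ → ℕ) (i : ℕ) : Prop := π (i - 1) < π i ∧ π i < π (i + 1)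

/-- Position `i` is descending: its element belongs to a descending set of `π`. -/
def DescAt (π : ℕ → ℕ) (i : ℕ) : Prop := π i < π (i - 1) ∧ π (i + 1) < π i

/-- The pinnacle set of `π ∈ S_n`, as a finset of values. -/
def pinFinset (n : ℕ) (π : ℕ → ℕ) : Finset ℕ :=
  ((Finset.Icc 1 n).filter fun i => π (i - 1) < π i ∧ π (i + 1) < π i).image π

/-- The reversal with endpoints at positions `a ≤ b` is balanced for `π`:
it does not modify the pinnacle set. -/
def BalancedRev (n : ℕ) (π : ℕ → ℕ) (a b : ℕ) : Prop :=
  pinFinset n (rev π a b) = pinFinset n π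

/-- Apply a sequence of reversals (each given by its pair of positions). -/
def applySeq (π : ℕ → ℕ) : List (ℕ × ℕ) → ℕ → ℕ
  | [] => π
  | ab :: L => applySeq (rev π ab.1 ab.2) L

/-- Every reversal of the sequence is balanced for the permutation to which
it is applied. -/
def IsBalancedSeq (n : ℕ) (π : ℕ → ℕ) : List (ℕ × ℕ) → Prop
  | [] => True
  | ab :: L => 1 ≤ ab.1 ∧ ab.1 ≤ ab.2 ∧ ab.2 ≤ n ∧ BalancedRev n π ab.1 ab.2 ∧
      IsBalancedSeq n (rev π ab.1 ab.2) L

/-- `π` is the extension of a permutation of `{1,…,n}` by the boundary values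
`π 0 = n+1` and `π (n+1) = n+2`. -/
def IsExtPerm (n : ℕ) (π : ℕ → ℕ) : Prop :=
  Set.BijOn π (Set.Icc 1 n) (Set.Icc 1 n) ∧ π 0 = n + 1 ∧ π (n + 1) = n + 2

/-- The positions of the pinnacles of `π`, from left to right. -/
def pinPosList (n : ℕ) (π : ℕ → ℕ) : List ℕ :=
  ((Finset.Icc 1 n).filter fun i => π (i - 1) < π i ∧ π (i + 1) < π i).sort (· ≤ ·)

/-- The positions of the dells of `π`, from left to right. -/
def dellPosList (n : ℕ) (π : ℕ → ℕ) : List ℕ :=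
  ((Finset.Icc 1 n).filter fun i => π i < π (i - 1) ∧ π i < π (i + 1)).sort (· ≤ ·)

/-- The pinnacles `y_1, …, y_p` of `π`, from left to right. -/
def pinList (n : ℕ) (π : ℕ → ℕ) : List ℕ := (pinPosList n π).map π

/-- The dells `v_1, …, v_{p+1}` of `π`, from left to right. -/
def dellList (n : ℕ) (π : ℕ → ℕ) : List ℕ := (dellPosList n π).map π

/-- The position of the dell `v q` (dells are indexed from `1`). -/
def vPos (n : ℕ) (π : ℕ → ℕ) (q : ℕ) : ℕ := (dellPosList n π).getD (q - 1) 0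

/-- The dell `v q`. -/
def vVal (n : ℕ) (π : ℕ → ℕ) (q : ℕ) : ℕ := π (vPos n π q)

/-- The position of the pinnacle `y q`, where `y 0` is at position `0` and
`y (p+1)` is at position `n+1`. -/
def yPos (n : ℕ) (π : ℕ → ℕ) (q : ℕ) : ℕ :=
  if q = 0 then 0 else (pinPosList n π).getD (q - 1) (n + 1)

/-- The pinnacle `y q`, where `y 0 = π 0 = n+1` and `y (p+1) = π (n+1) = n+2`. -/
def yVal (n : ℕ) (π : ℕ → ℕ) (q : ℕ) : ℕ := π (yPos n π q)

/-- The elements of `π` at positions `1, …, n`, read from left to right. -/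
def toList (n : ℕ) (π : ℕ → ℕ) : List ℕ := (List.range n).map fun i => π (i + 1)

/-- The cutpoint `cutA_π(z, v_q, y_q)`: the largest element `e` of
`A_π(v_q, y_q) ∪ {v_q}` such that `e < z`. -/
noncomputable def cutA (n : ℕ) (π : ℕ → ℕ) (q z : ℕ) : ℕ :=
  sSup ((insert (vVal n π q) (π '' Set.Ioo (vPos n π q) (yPos n π q))) ∩ Set.Iio z)

/-- The cutpoint `cutD_π(z, y_{q-1}, v_q)`: the largest element `e` of
`D_π(y_{q-1}, v_q) ∪ {v_q}` such that `e < z`. -/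
noncomputable def cutD (n : ℕ) (π : ℕ → ℕ) (q z : ℕ) : ℕ :=
  sSup ((insert (vVal n π q) (π '' Set.Ioo (yPos n π (q - 1)) (vPos n π q))) ∩ Set.Iio z)

/-- The canonical permutation `Id_S ∈ S_n` (extended by its boundary values):
the elements of `S` in increasing order at positions `2, 4, …, 2|S|`, and the
elements of `{1,…,n} \ S` in increasing order at the remaining positions. -/
def canon (n : ℕ) (S : Finset ℕ) : ℕ → ℕ := fun i =>
  if i = 0 then n + 1
  else if i = n + 1 then n + 2
  else if i ≤ 2 * S.card ∧ i % 2 = 0 then (S.sort (· ≤ ·)).getD (i / 2 - 1) 0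
  else if i ≤ 2 * S.card then (((Finset.Icc 1 n) \ S).sort (· ≤ ·)).getD ((i - 1) / 2) 0
  else (((Finset.Icc 1 n) \ S).sort (· ≤ ·)).getD (i - S.card - 1) 0

/-- Type A.1. Suppose `w₁ = π a` belongs to an ascending set
`A_π(v_i, y_i)` and `w₂ = π b` to a descending set `D_π(y_j, v_{j+1})` with
`1 ≤ a ≤ b ≤ n` (so `i ≤ j`). If `Next π w₂ ≠ v_{j+1}` (i.e. position `b+1` is not
a dell) implies `w₁ > Next π w₂`, and `Prec π w₁ ≠ v_i` (i.e. position `a-1` is not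
a dell) implies `w₂ > Prec π w₁`, then `ρ(w₁, w₂)` is balanced for `π`. -/
theorem statement4 (n : ℕ) (π : ℕ → ℕ) (hπ : IsExtPerm n π) (a b : ℕ)
    (ha : 1 ≤ a) (hab : a ≤ b) (hb : b ≤ n)
    (h1 : AscAt π a) (h2 : DescAt π b)
    (hc1 : ¬ DellAt π (b + 1) → π (b + 1) < π a)
    (hc2 : ¬ DellAt π (a - 1) → π (a - 1) < π b) :
    BalancedRev n π a b := by
  obtain ⟨hA1, hA2⟩ := h1
  obtain ⟨hD1, hD2⟩ := h2
  have hab' : a < b := by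
    rcases lt_or_eq_of_le hab with h | h
    · exact h
    · subst h; omega
  have hrin : ∀ i, a ≤ i → i ≤ b → rev π a b i = π (a + b - i) := by
    intro i h1' h2'
    simp only [rev]
    rw [if_pos ⟨h1', h2'⟩]
  have hrout : ∀ i, (i < a ∨ b < i) → rev π a b i = π i := by
    intro i h
    simp only [rev]
    rw [if_neg (by omega)]
  unfold BalancedRev pinFinset
  ext x
  simp only [Finset.mem_image, Finset.mem_filter, Finset.mem_Icc]
  constructor
  · rintro ⟨i, ⟨⟨hi1, hi2⟩, hp1, hp2⟩, rfl⟩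
    by_cases hia : i < a
    · -- position strictly left of the block
      have hne : i ≠ a - 1 := by
        intro h
        subst h
        rw [hrout (a - 1 - 1) (by omega), hrout (a - 1) (by omega)] at hp1
        have e1 : a - 1 + 1 = a := by omega
        rw [e1, hrin a le_rfl (by omega), hrout (a - 1) (by omega)] at hp2
        have e2 : a + b - a = b := by omega
        rw [e2] at hp2
        by_cases hd : DellAt π (a - 1)
        · obtain ⟨hd1, _⟩ := hd
          omega
        · have := hc2 hd
          omega
      rw [hrout (i - 1) (by omega), hrout i (by omega)] at hp1
      rw [hrout (i + 1) (by omega), hrout i (by omega)] at hp2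
      exact ⟨i, ⟨⟨hi1, hi2⟩, hp1, hp2⟩, (hrout i (by omega)).symm⟩
    · by_cases hib : b < i
      · -- position strictly right of the block
        have hne : i ≠ b + 1 := by
          intro h
          subst h
          have e1 : b + 1 - 1 = b := by omega
          rw [e1, hrin b (by omega) le_rfl, hrout (b + 1) (by omega)] at hp1
          have e2 : a + b - b = a := by omega
          rw [e2] at hp1
          rw [hrout (b + 1 + 1) (by omega), hrout (b + 1) (by omega)] at hp2
          by_cases hd : DellAt π (b + 1)
          · obtain ⟨_, hd2⟩ := hd
            omega
          · have := hc1 hd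
            omega
        rw [hrout (i - 1) (by omega), hrout i (by omega)] at hp1
        rw [hrout (i + 1) (by omega), hrout i (by omega)] at hp2
        exact ⟨i, ⟨⟨hi1, hi2⟩, hp1, hp2⟩, (hrout i (by omega)).symm⟩
      · -- position inside the block
        have hia' : a ≤ i := by omega
        have hib' : i ≤ b := by omega
        have hnea : i ≠ a := by
          intro h
          subst h
          rw [hrin (i + 1) (by omega) (by omega), hrin i le_rfl (by omega)] at hp2
          have e1 : i + b - (i + 1) = b - 1 := by omega
          have e2 : i + b - i = b := by omega
          rw [e1, e2] at hp2
          omega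
        have hneb : i ≠ b := by
          intro h
          subst h
          rw [hrin (i - 1) (by omega) (by omega), hrin i (by omega) le_rfl] at hp1
          have e1 : a + i - (i - 1) = a + 1 := by omega
          have e2 : a + i - i = a := by omega
          rw [e1, e2] at hp1
          omega
        have hia2 : a < i := by omega
        have hib2 : i < b := by omega
        set j := a + b - i with hj
        rw [hrin (i - 1) (by omega) (by omega), hrin i hia' hib'] at hp1
        rw [hrin (i + 1) (by omega) (by omega), hrin i hia' hib'] at hp2
        have e1 : a + b - (i - 1) = j + 1 := by omega
        have e2 : a + b - (i + 1) = j - 1 := by omega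
        rw [e1] at hp1
        rw [e2] at hp2
        exact ⟨j, ⟨⟨by omega, by omega⟩, hp2, hp1⟩, (hrin i hia' hib').symm⟩
  · rintro ⟨i, ⟨⟨hi1, hi2⟩, hp1, hp2⟩, rfl⟩
    by_cases hia : i < a
    · have hne : i ≠ a - 1 := by
        intro h
        subst h
        have e1 : a - 1 + 1 = a := by omega
        rw [e1] at hp2
        omega
      refine ⟨i, ⟨⟨hi1, hi2⟩, ?_, ?_⟩, hrout i (by omega)⟩
      · rw [hrout (i - 1) (by omega), hrout i (by omega)]; exact hp1
      · rw [hrout (i + 1) (by omega), hrout i (by omega)]; exact hp2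
    · by_cases hib : b < i
      · have hne : i ≠ b + 1 := by
          intro h
          subst h
          have e1 : b + 1 - 1 = b := by omega
          rw [e1] at hp1
          omega
        refine ⟨i, ⟨⟨hi1, hi2⟩, ?_, ?_⟩, hrout i (by omega)⟩
        · rw [hrout (i - 1) (by omega), hrout i (by omega)]; exact hp1
        · rw [hrout (i + 1) (by omega), hrout i (by omega)]; exact hp2
      · have hia' : a ≤ i := by omega
        have hib' : i ≤ b := by omega
        have hnea : i ≠ a := by
          intro h
          subst h
          omega
        have hneb : i ≠ b := by
          intro h
          subst h
          omega
        have hia2 : a < i := by omega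
        have hib2 : i < b := by omega
        set j := a + b - i with hj
        refine ⟨j, ⟨⟨by omega, by omega⟩, ?_, ?_⟩, ?_⟩
        · rw [hrin (j - 1) (by omega) (by omega), hrin j (by omega) (by omega)]
          have e1 : a + b - (j - 1) = i + 1 := by omega
          have e2 : a + b - j = i := by omega
          rw [e1, e2]
          exact hp2
        · rw [hrin (j + 1) (by omega) (by omega), hrin j (by omega) (by omega)]
          have e1 : a + b - (j + 1) = i - 1 := by omega
          have e2 : a + b - j = i := by omega
          rw [e1, e2]
          exact hp1
        · rw [hrin j (by omega) (by omega)]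
          have e2 : a + b - j = i := by omega
          rw [e2]
end

section
/- (Type B.1) Let π ∈ S_n and let w_1 = π_a and w_2 = π_b with 1 ≤ a ≤ b ≤ n. Suppose w_1 ∈ D_π(y_{i−1}, v_i) and w_2 ∈ A_π(v_j, y_j) with i ≤ j, and suppose w_1 < Next_π(w_2) and w_2 < Prec_π(w_1). Then the reversal ρ(w_1, w_2) is balanced for π. -/
/-- The position involution underlying the block reversal. -/
def frev (a b : ℕ) : ℕ → ℕ := fun i => if a ≤ i ∧ i ≤ b then a + b - i else i

lemma frev_invol (a b i : ℕ) : frev a b (frev a b i) = i := by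
  unfold frev
  by_cases h : a ≤ i ∧ i ≤ b
  · rw [if_pos h, if_pos ⟨by omega, by omega⟩]; omega
  · rw [if_neg h, if_neg h]

lemma rev_eq_frev (π : ℕ → ℕ) (a b i : ℕ) : rev π a b i = π (frev a b i) := by
  unfold rev frev
  by_cases h : a ≤ i ∧ i ≤ b <;> simp [h]

/-- Type B.1. Suppose `w₁ = π a` belongs to a descending set
`D_π(y_{i-1}, v_i)` and `w₂ = π b` to an ascending set `A_π(v_j, y_j)` with
`1 ≤ a ≤ b ≤ n` (so `i ≤ j`). If `w₁ < Next π w₂` and `w₂ < Prec π w₁`, then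
`ρ(w₁, w₂)` is balanced for `π`. -/
theorem statement5 (n : ℕ) (π : ℕ → ℕ) (hπ : IsExtPerm n π) (a b : ℕ)
    (ha : 1 ≤ a) (hab : a ≤ b) (hb : b ≤ n)
    (h1 : DescAt π a) (h2 : AscAt π b)
    (hc1 : π a < π (b + 1)) (hc2 : π b < π (a - 1)) :
    BalancedRev n π a b := by
  obtain ⟨h11, h12⟩ := h1
  obtain ⟨h21, h22⟩ := h2
  have hlt : a < b := by
    rcases lt_or_eq_of_le hab with h | h
    · exact h
    · subst h; exact absurd h21 (lt_asymm h11)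
  have hin : ∀ i, a ≤ i → i ≤ b → rev π a b i = π (a + b - i) := by
    intro i h h'; simp [rev, h, h']
  have hout : ∀ i, ¬(a ≤ i ∧ i ≤ b) → rev π a b i = π i := by
    intro i h; simp only [rev]; rw [if_neg h]
  have hfb : ∀ i, 1 ≤ i → i ≤ n → 1 ≤ frev a b i ∧ frev a b i ≤ n := by
    intro i h h'; unfold frev; split <;> omega
  have key : ∀ j, 1 ≤ j → j ≤ n →
      ((rev π a b (frev a b j - 1) < rev π a b (frev a b j) ∧
        rev π a b (frev a b j + 1) < rev π a b (frev a b j)) ↔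
       (π (j - 1) < π j ∧ π (j + 1) < π j)) := by
    intro j hj1 hjn
    rcases lt_trichotomy j a with hja | hje | hja
    · -- j < a : frev j = j
      have hf : frev a b j = j := if_neg (by omega)
      rcases eq_or_lt_of_le (show j ≤ a - 1 by omega) with hje | hje
      · -- j = a - 1
        rw [hf, hje, show a - 1 + 1 = a from by omega,
            hout (a - 1 - 1) (by omega), hout (a - 1) (by omega),
            hin a le_rfl hlt.le, show a + b - a = b from by omega]
        omega
      · rw [hf, hout (j - 1) (by omega), hout j (by omega), hout (j + 1) (by omega)]
    · -- j = a : frev a = b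
      have hf : frev a b a = b := by
        simp only [frev]; rw [if_pos ⟨le_rfl, hab⟩]; omega
      rw [hje, hf,
          hin (b - 1) (by omega) (by omega), show a + b - (b - 1) = a + 1 from by omega,
          hin b hab le_rfl, show a + b - b = a from by omega,
          hout (b + 1) (by omega)]
      omega
    · rcases lt_trichotomy j b with hjb | hje | hjb
      · -- a < j < b : frev j = a + b - j
        have hf : frev a b j = a + b - j := if_pos ⟨by omega, by omega⟩
        rw [hf,
            hin (a + b - j - 1) (by omega) (by omega),
            hin (a + b - j) (by omega) (by omega),
            hin (a + b - j + 1) (by omega) (by omega),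
            show a + b - (a + b - j - 1) = j + 1 from by omega,
            show a + b - (a + b - j) = j from by omega,
            show a + b - (a + b - j + 1) = j - 1 from by omega]
        omega
      · -- j = b : frev b = a
        have hf : frev a b b = a := by
          simp only [frev]; rw [if_pos ⟨hab, le_rfl⟩]; omega
        rw [hje, hf,
            hout (a - 1) (by omega),
            hin a le_rfl hlt.le, show a + b - a = b from by omega,
            hin (a + 1) (by omega) (by omega),
            show a + b - (a + 1) = b - 1 from by omega]
        omega
      · -- j > b : frev j = j
        have hf : frev a b j = j := if_neg (by omega)
        rcases eq_or_lt_of_le (show b + 1 ≤ j by omega) with hje | hje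
        · -- j = b + 1
          rw [hf, ← hje, show b + 1 - 1 = b from by omega,
              hin b hab le_rfl, show a + b - b = a from by omega,
              hout (b + 1) (by omega), hout (b + 1 + 1) (by omega)]
          omega
        · rw [hf, hout (j - 1) (by omega), hout j (by omega), hout (j + 1) (by omega)]
  unfold BalancedRev pinFinset
  ext x
  simp only [Finset.mem_image, Finset.mem_filter, Finset.mem_Icc]
  constructor
  · rintro ⟨i, ⟨⟨hi1, hi2⟩, hp⟩, rfl⟩
    refine ⟨frev a b i, ⟨⟨(hfb i hi1 hi2).1, (hfb i hi1 hi2).2⟩, ?_⟩, ?_⟩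
    · have hk := key (frev a b i) (hfb i hi1 hi2).1 (hfb i hi1 hi2).2
      rw [frev_invol] at hk
      exact hk.mp hp
    · exact (rev_eq_frev π a b i).symm
  · rintro ⟨j, ⟨⟨hj1, hj2⟩, hq⟩, rfl⟩
    refine ⟨frev a b j, ⟨⟨(hfb j hj1 hj2).1, (hfb j hj1 hj2).2⟩, ?_⟩, ?_⟩
    · exact (key j hj1 hj2).mpr hq
    · rw [rev_eq_frev, frev_invol]
end

section
/- (Type B.3) Let π ∈ S_n and let w_1 = π_a and w_2 = π_b with 1 ≤ a ≤ b ≤ n. Suppose w_1 = v_i is a dell of π and w_2 ∈ A_π(v_j, y_j) with i ≤ j, and suppose w_2 < Prec_π(w_1), and that if Next_π(w_2) = y_j and y_j ≠ y_{p+1} then w_1 < Next_π(w_2). Then the reversal ρ(w_1, w_2) is balanced for π. -/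
/-- Auxiliary involution used to match pinnacle positions of `π` and of
`rev π a b`. -/
def gmap (a b i : ℕ) : ℕ := if a < i ∧ i < b then a + b - i else i

lemma rev_in (π : ℕ → ℕ) {a b i : ℕ} (h1 : a ≤ i) (h2 : i ≤ b) :
    rev π a b i = π (a + b - i) := if_pos ⟨h1, h2⟩

lemma rev_out (π : ℕ → ℕ) {a b i : ℕ} (h : ¬(a ≤ i ∧ i ≤ b)) :
    rev π a b i = π i := if_neg h

lemma gmap_inv (a b i : ℕ) : gmap a b (gmap a b i) = i := by
  unfold gmap
  split
  · next h => rw [if_pos (by omega)]; omega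
  · next h => rfl

/-- Type B.3. Suppose `w₁ = π a` is a dell `v_i` of `π` and
`w₂ = π b` belongs to an ascending set `A_π(v_j, y_j)`, with `1 ≤ a ≤ b ≤ n`
(so `i ≤ j`). If `w₂ < Prec π w₁`, and moreover `w₁ < Next π w₂` whenever
`Next π w₂ = y_j ≠ y_{p+1}` (i.e. whenever `b+1 ≤ n` is a pinnacle position),
then `ρ(w₁, w₂)` is balanced for `π`. -/
theorem statement8 (n : ℕ) (π : ℕ → ℕ) (hπ : IsExtPerm n π) (a b : ℕ)
    (ha : 1 ≤ a) (hab : a ≤ b) (hb : b ≤ n)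
    (h1 : DellAt π a) (h2 : AscAt π b)
    (hc1 : π b < π (a - 1))
    (hc2 : b + 1 ≤ n → PinAt π (b + 1) → π a < π (b + 1)) :
    BalancedRev n π a b := by
  rcases eq_or_lt_of_le hab with rfl | hab'
  · have hid : rev π a a = π := by
      funext i
      simp only [rev]
      split
      · next h => congr 1; omega
      · rfl
    rw [BalancedRev, hid]
  · obtain ⟨hd1, hd2⟩ := h1
    obtain ⟨ha1, ha2⟩ := h2
    have hgmem : ∀ i, 1 ≤ i → i ≤ n → 1 ≤ gmap a b i ∧ gmap a b i ≤ n := by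
      intro i hi1 hi2; unfold gmap; split <;> omega
    have key : ∀ i, 1 ≤ i → i ≤ n →
        (PinAt (rev π a b) i ↔ PinAt π (gmap a b i)) ∧
        (PinAt (rev π a b) i → rev π a b i = π (gmap a b i)) := by
      intro i hi1 hi2
      rcases lt_trichotomy i a with hia | rfl | hia
      · have hgi : gmap a b i = i := if_neg (by omega)
        rw [hgi]
        have e2 : rev π a b i = π i := rev_out π (by omega)
        refine ⟨?_, fun _ => e2⟩
        have e1 : rev π a b (i - 1) = π (i - 1) := rev_out π (by omega)
        by_cases he : i + 1 = a
        · have e3 : rev π a b (i + 1) = π b := by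
            rw [he, rev_in π le_rfl (le_of_lt hab')]; congr 1; omega
          have hi' : i = a - 1 := by omega
          unfold PinAt
          rw [e1, e2, e3]
          constructor
          · rintro ⟨x1, _⟩
            exact ⟨x1, by rw [he, hi']; exact hd1⟩
          · rintro ⟨x1, _⟩
            exact ⟨x1, by rw [hi']; exact hc1⟩
        · have e3 : rev π a b (i + 1) = π (i + 1) := rev_out π (by omega)
          unfold PinAt; rw [e1, e2, e3]
      · have hgi : gmap i b i = i := if_neg (by omega)
        rw [hgi]
        have e1 : rev π i b (i - 1) = π (i - 1) := rev_out π (by omega)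
        have e2 : rev π i b i = π b := by
          rw [rev_in π le_rfl (le_of_lt hab')]; congr 1; omega
        constructor
        · unfold PinAt
          rw [e1, e2]
          constructor
          · rintro ⟨x1, _⟩; exact absurd x1 (by omega)
          · rintro ⟨x1, _⟩; exact absurd x1 (by omega)
        · intro hp
          exfalso
          have := hp.1
          rw [e1, e2] at this
          omega
      · rcases lt_trichotomy i b with hib | rfl | hib
        · have hgi : gmap a b i = a + b - i := if_pos ⟨hia, hib⟩
          rw [hgi]
          have e1 : rev π a b (i - 1) = π (a + b - i + 1) := by
            rw [rev_in π (by omega) (by omega)]; congr 1; omega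
          have e2 : rev π a b i = π (a + b - i) := by
            rw [rev_in π (by omega) (by omega)]
          have e3 : rev π a b (i + 1) = π (a + b - i - 1) := by
            rw [rev_in π (by omega) (by omega)]; congr 1 <;> omega
          refine ⟨?_, fun _ => e2⟩
          unfold PinAt
          rw [e1, e2, e3]
          constructor
          · rintro ⟨x1, x2⟩; exact ⟨x2, x1⟩
          · rintro ⟨x1, x2⟩; exact ⟨x2, x1⟩
        · have hgi : gmap a i i = i := if_neg (by omega)
          rw [hgi]
          have e1 : rev π a i (i - 1) = π (a + 1) := by
            rw [rev_in π (by omega) (by omega)]; congr 1; omega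
          have e2 : rev π a i i = π a := by
            rw [rev_in π (le_of_lt hab') le_rfl]; congr 1; omega
          constructor
          · unfold PinAt
            rw [e1, e2]
            constructor
            · rintro ⟨x1, _⟩; exact absurd x1 (by omega)
            · rintro ⟨_, x2⟩; exact absurd x2 (by omega)
          · intro hp
            exfalso
            have := hp.1
            rw [e1, e2] at this
            omega
        · have hgi : gmap a b i = i := if_neg (by omega)
          rw [hgi]
          have e2 : rev π a b i = π i := rev_out π (by omega)
          have e3 : rev π a b (i + 1) = π (i + 1) := rev_out π (by omega)
          refine ⟨?_, fun _ => e2⟩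
          by_cases he : i = b + 1
          · have e1 : rev π a b (i - 1) = π a := by
              rw [show i - 1 = b by omega, rev_in π (le_of_lt hab') le_rfl]
              congr 1; omega
            unfold PinAt
            rw [e1, e2, e3]
            subst he
            constructor
            · rintro ⟨_, x2⟩; exact ⟨ha2, x2⟩
            · rintro ⟨x1, x2⟩
              exact ⟨hc2 hi2 ⟨x1, x2⟩, x2⟩
          · have e1 : rev π a b (i - 1) = π (i - 1) := rev_out π (by omega)
            unfold PinAt
            rw [e1, e2, e3]
    unfold BalancedRev pinFinset
    ext x
    simp only [Finset.mem_image, Finset.mem_filter, Finset.mem_Icc]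
    constructor
    · rintro ⟨i, ⟨⟨hi1, hi2⟩, hpin⟩, hx⟩
      have hp : PinAt (rev π a b) i := hpin
      obtain ⟨hiff, heq⟩ := key i hi1 hi2
      exact ⟨gmap a b i, ⟨⟨(hgmem i hi1 hi2).1, (hgmem i hi1 hi2).2⟩, hiff.mp hp⟩,
        by rw [← heq hp, hx]⟩
    · rintro ⟨i, ⟨⟨hi1, hi2⟩, hpin⟩, hx⟩
      have hp : PinAt π i := hpin
      have hm := hgmem i hi1 hi2
      obtain ⟨hiff, heq⟩ := key (gmap a b i) hm.1 hm.2
      have hp' : PinAt (rev π a b) (gmap a b i) := by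
        apply hiff.mpr
        rw [gmap_inv]
        exact hp
      exact ⟨gmap a b i, ⟨⟨hm.1, hm.2⟩, hp'⟩,
        by rw [heq hp', gmap_inv, hx]⟩
end

section
/- (Type C.1) Let π ∈ S_n and let w_1 = π_a and w_2 = π_b with 1 ≤ a ≤ b ≤ n. Suppose w_1 = v_i is a dell and w_2 = y_j is a pinnacle of π with i ≤ j, and suppose Prec_π(w_1) ≠ y_{i−1}, w_2 > Prec_π(w_1) and w_1 > Next_π(w_2). Then the reversal ρ(w_1, w_2) is balanced for π. -/
/-- Index map of the block reversal. -/
def revIdx (a b i : ℕ) : ℕ := if a ≤ i ∧ i ≤ b then a + b - i else i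

lemma revIdx_invol (a b i : ℕ) (h : a ≤ b) : revIdx a b (revIdx a b i) = i := by
  unfold revIdx; split_ifs <;> omega

lemma rev_apply (π : ℕ → ℕ) (a b i : ℕ) : rev π a b i = π (revIdx a b i) := by
  unfold rev revIdx; split_ifs <;> rfl

/-- Type C.1. Suppose `w₁ = π a` is a dell `v_i` and `w₂ = π b`
is a pinnacle `y_j` of `π`, with `1 ≤ a ≤ b ≤ n` (so `i ≤ j`). If
`Prec π w₁ ≠ y_{i-1}` (i.e. `a ≥ 2` and position `a-1` is not a pinnacle),
`w₂ > Prec π w₁` and `w₁ > Next π w₂`, then `ρ(w₁, w₂)` is balanced for `π`. -/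
theorem statement9 (n : ℕ) (π : ℕ → ℕ) (hπ : IsExtPerm n π) (a b : ℕ)
    (ha : 1 ≤ a) (hab : a ≤ b) (hb : b ≤ n)
    (h1 : DellAt π a) (h2 : PinAt π b)
    (ha2 : 2 ≤ a) (hprec : ¬ PinAt π (a - 1))
    (hc1 : π (a - 1) < π b) (hc2 : π (b + 1) < π a) :
    BalancedRev n π a b := by
  have hab' : a < b := by
    rcases lt_or_eq_of_le hab with h | h
    · exact h
    · subst h; exact absurd h1.2 (not_lt.mpr h2.2.le)
  have hkey : ∀ i, 1 ≤ i → i ≤ n → (PinAt (rev π a b) i ↔ PinAt π (revIdx a b i)) := by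
    intro i hi1 hi2
    unfold PinAt
    rw [rev_apply, rev_apply, rev_apply]
    by_cases c1 : i + 1 < a
    · have e0 : revIdx a b (i - 1) = i - 1 := by unfold revIdx; split_ifs <;> omega
      have e1 : revIdx a b i = i := by unfold revIdx; split_ifs <;> omega
      have e2 : revIdx a b (i + 1) = i + 1 := by unfold revIdx; split_ifs <;> omega
      rw [e0, e1, e2]
    · by_cases c2 : i + 1 = a
      · have hi : i = a - 1 := by omega
        subst hi
        have e0 : revIdx a b (a - 1 - 1) = a - 1 - 1 := by
          unfold revIdx; split_ifs <;> omega
        have e1 : revIdx a b (a - 1) = a - 1 := by unfold revIdx; split_ifs <;> omega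
        have e2 : revIdx a b (a - 1 + 1) = b := by unfold revIdx; split_ifs <;> omega
        rw [e0, e1, e2]
        exact iff_of_false (fun h => by have := h.2; omega) hprec
      · by_cases c3 : i = a
        · rw [c3]
          have e0 : revIdx a b (a - 1) = a - 1 := by unfold revIdx; split_ifs <;> omega
          have e1 : revIdx a b a = b := by unfold revIdx; split_ifs <;> omega
          have e2 : revIdx a b (a + 1) = b - 1 := by unfold revIdx; split_ifs <;> omega
          rw [e0, e1, e2]
          exact iff_of_true ⟨hc1, h2.1⟩ h2
        · by_cases c4 : i < b
          · -- a < i < b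
            have e0 : revIdx a b (i - 1) = a + b - i + 1 := by
              unfold revIdx; split_ifs <;> omega
            have e1 : revIdx a b i = a + b - i := by unfold revIdx; split_ifs <;> omega
            have e2 : revIdx a b (i + 1) = a + b - i - 1 := by
              unfold revIdx; split_ifs <;> omega
            rw [e0, e1, e2]
            exact And.comm
          · by_cases c5 : i = b
            · rw [c5]
              have e0 : revIdx a b (b - 1) = a + 1 := by unfold revIdx; split_ifs <;> omega
              have e1 : revIdx a b b = a := by unfold revIdx; split_ifs <;> omega
              have e2 : revIdx a b (b + 1) = b + 1 := by unfold revIdx; split_ifs <;> omega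
              rw [e0, e1, e2]
              exact iff_of_false (fun h => by have := h.1; have := h1.2; omega)
                (fun h => by have := h.2; have := h1.2; omega)
            · by_cases c6 : i = b + 1
              · rw [c6]
                have e0 : revIdx a b (b + 1 - 1) = a := by
                  unfold revIdx; split_ifs <;> omega
                have e1 : revIdx a b (b + 1) = b + 1 := by
                  unfold revIdx; split_ifs <;> omega
                have e2 : revIdx a b (b + 1 + 1) = b + 1 + 1 := by
                  unfold revIdx; split_ifs <;> omega
                rw [e0, e1, e2]
                simp only [Nat.add_sub_cancel]
                exact iff_of_false (fun h => by have := h.1; omega)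
                  (fun h => by have := h.1; have := h2.2; omega)
              · have e0 : revIdx a b (i - 1) = i - 1 := by
                  unfold revIdx; split_ifs <;> omega
                have e1 : revIdx a b i = i := by unfold revIdx; split_ifs <;> omega
                have e2 : revIdx a b (i + 1) = i + 1 := by
                  unfold revIdx; split_ifs <;> omega
                rw [e0, e1, e2]
  unfold BalancedRev pinFinset
  ext x
  simp only [Finset.mem_image, Finset.mem_filter, Finset.mem_Icc]
  constructor
  · rintro ⟨i, ⟨⟨hi1, hi2⟩, hp⟩, hx⟩
    refine ⟨revIdx a b i, ⟨⟨?_, ?_⟩, ?_⟩, ?_⟩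
    · unfold revIdx; split_ifs <;> omega
    · unfold revIdx; split_ifs <;> omega
    · exact (hkey i hi1 hi2).mp hp
    · rw [← rev_apply π a b i]; exact hx
  · rintro ⟨j, ⟨⟨hj1, hj2⟩, hp⟩, hx⟩
    have hb1 : 1 ≤ revIdx a b j := by unfold revIdx; split_ifs <;> omega
    have hb2 : revIdx a b j ≤ n := by unfold revIdx; split_ifs <;> omega
    refine ⟨revIdx a b j, ⟨⟨hb1, hb2⟩, ?_⟩, ?_⟩
    · exact (hkey _ hb1 hb2).mpr (by rw [revIdx_invol a b j hab]; exact hp)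
    · rw [rev_apply, revIdx_invol a b j hab]; exact hx
end

section
/- Let π ∈ S_n have pinnacle set S with |S| = p, and write its pinnacles in left-to-right order as y_1, …, y_p. Assume that y_1, y_2, …, y_k are the k lowest pinnacles (in increasing order), with k ≥ 1, and that y_t with t ≠ k+1 is the next lowest pinnacle. Then there is a single balanced reversal transforming π into a permutation whose (k+1)-st pinnacle from the left is y_t, and which does not modify the pinnacles y_s for s ∈ {1, …, k, t+1, …, p}. -/
/-!
Let `y_k < y_t < y_{k+1}`. Between the positions of `y_k` and `y_{k+1}` there is a position `a`
with `π (a - 1) < y_t ≤ π a`; let `b` be the position of `y_t`. Both outer neighbours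
`π (a - 1)` and `π (b + 1)` of the block `[a, b]` are smaller than both of its ends, so reversing
the block simply reflects the pinnacle positions: the pinnacle set is unchanged, and the
pinnacles `y_{k+1}, …, y_t`, which are exactly those inside the block, appear in reverse order.
-/

lemma exists_crossing {α : Type*} [LinearOrder α] (f : ℕ → α) {z : α} {i j : ℕ}
    (hij : i ≤ j) (hi : f i < z) (hj : z ≤ f j) :
    ∃ a, i < a ∧ a ≤ j ∧ f (a - 1) < z ∧ z ≤ f a := by
  induction j, hij using Nat.le_induction with
  | base => exact absurd hj hi.not_ge
  | succ j hij ih =>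
    by_cases h : z ≤ f j
    · obtain ⟨a, hia, haj, ha⟩ := ih h
      exact ⟨a, hia, by omega, ha⟩
    · exact ⟨j + 1, by omega, le_rfl, by simpa using h, hj⟩

namespace List.SortedLT

variable {α : Type*} [LinearOrder α] {l : List α} (hl : l.SortedLT) {x : α} {i k : ℕ}
include hl

lemma le_getElem_of_mem_take (hx : x ∈ l.take k) (hi : i < l.length) (hki : k ≤ i + 1) :
    x ≤ l[i] := by
  obtain ⟨j, hj, rfl⟩ := List.mem_take_iff_getElem.1 hx
  exact (hl.getElem_le_getElem_iff).2 (by omega)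

lemma getElem_le_of_mem_drop (hx : x ∈ l.drop k) (hi : i < l.length) (hik : i ≤ k) :
    l[i] ≤ x := by
  obtain ⟨j, hj, rfl⟩ := List.mem_drop_iff_getElem.1 hx
  exact (hl.getElem_le_getElem_iff).2 (by omega)

lemma getElem_lt_of_mem_drop (hx : x ∈ l.drop k) (hi : i < l.length) (hik : i < k) :
    l[i] < x := by
  obtain ⟨j, hj, rfl⟩ := List.mem_drop_iff_getElem.1 hx
  exact (hl.getElem_lt_getElem_iff).2 (by omega)

end List.SortedLT

def reverseBlock {α : Type*} (l : List α) (i j : ℕ) : List α :=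
  l.take i ++ ((l.drop i).take (j - i)).reverse ++ l.drop j

lemma getD_reverseBlock {α : Type*} (l : List α) {i j : ℕ} (hij : i ≤ j) (hj : j ≤ l.length)
    (m : ℕ) (d : α) :
    (reverseBlock l i j).getD m d = l.getD (if i ≤ m ∧ m < j then i + j - 1 - m else m) d := by
  simp only [reverseBlock, List.getD_eq_getElem?_getD]
  split_ifs with h
  · rw [List.getElem?_append_left (by simp; omega), List.getElem?_append_right (by simp; omega),
      List.getElem?_reverse (by simp; omega)]
    simp only [List.getElem?_take, List.getElem?_drop, List.length_take, List.length_drop]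
    rw [if_pos (by omega)]
    congr 2; omega
  · rcases Nat.lt_or_ge m i with hm | hm
    · rw [List.getElem?_append_left (by simp; omega), List.getElem?_append_left (by simp; omega)]
      simp [hm]
    · rw [List.getElem?_append_right (by simp; omega)]
      simp only [List.getElem?_drop, List.length_append, List.length_take, List.length_drop,
        List.length_reverse]
      congr 2; omega

def reflect (a b i : ℕ) : ℕ := if a ≤ i ∧ i ≤ b then a + b - i else i

lemma reflect_involutive (a b : ℕ) : Function.Involutive (reflect a b) := by
  intro i
  unfold reflect
  split_ifs <;> omega

lemma reflect_mem_Icc {a b c n i : ℕ} (hca : c ≤ a) (hbn : b ≤ n) (hi : c ≤ i ∧ i ≤ n) :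
    c ≤ reflect a b i ∧ reflect a b i ≤ n := by
  unfold reflect
  split_ifs <;> omega

lemma reflect_of_mem {a b i : ℕ} (h : a ≤ i ∧ i ≤ b) : reflect a b i = a + b - i := if_pos h

lemma reflect_of_not_mem {a b i : ℕ} (h : ¬(a ≤ i ∧ i ≤ b)) : reflect a b i = i := if_neg h

lemma sort_image_reflect {a b : ℕ} (hab : a ≤ b) {L M R : List ℕ} (h : (L ++ M ++ R).SortedLT)
    (hL : ∀ x ∈ L, x < a) (hM : ∀ x ∈ M, a ≤ x ∧ x ≤ b) (hR : ∀ x ∈ R, b < x) :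
    ((L ++ M ++ R).toFinset.image (reflect a b)).sort =
      L ++ (M.map (reflect a b)).reverse ++ R := by
  have hMr : ∀ y ∈ (M.map (reflect a b)).reverse, a ≤ y ∧ y ≤ b := by
    simp only [List.mem_reverse, List.mem_map]
    rintro _ ⟨x, hx, rfl⟩
    have := hM x hx
    rw [reflect_of_mem this]; omega
  apply List.SortedLT.eq_of_mem_iff (Finset.sortedLT_sort _)
  · rw [List.sortedLT_iff_pairwise] at h ⊢
    simp only [List.pairwise_append, List.mem_append] at h ⊢
    obtain ⟨⟨hLs, hMs, -⟩, hRs, -⟩ := h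
    refine ⟨⟨hLs, ?_, fun x hx y hy => (hL x hx).trans_le (hMr y hy).1⟩, hRs,
      fun x hx y hy => ?_⟩
    · rw [List.pairwise_reverse, List.pairwise_map]
      refine hMs.imp_of_mem fun {x y} hx hy hxy => ?_
      rw [reflect_of_mem (hM _ hx), reflect_of_mem (hM _ hy)]
      have := hM _ hy; omega
    · have := hR y hy
      rcases hx with hx | hx
      · have := hL x hx; omega
      · have := hMr x hx; omega
  · intro x
    simp only [Finset.mem_sort, Finset.mem_image, List.mem_toFinset, List.mem_append,
      List.mem_reverse, List.mem_map, reflect]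
    grind

lemma rev_eq_comp_reflect (π : ℕ → ℕ) (a b : ℕ) : rev π a b = π ∘ reflect a b := by
  funext i
  simp only [rev, reflect, Function.comp_apply]
  split_ifs <;> rfl

instance PinAt.decidablePred (π : ℕ → ℕ) : DecidablePred (PinAt π) :=
  fun _ => inferInstanceAs (Decidable (_ ∧ _))

lemma mem_pinPosList {n : ℕ} {π : ℕ → ℕ} {i : ℕ} :
    i ∈ pinPosList n π ↔ i ∈ Finset.Icc 1 n ∧ PinAt π i := by
  simp only [pinPosList, Finset.mem_sort, Finset.mem_filter, PinAt]

lemma sortedLT_pinPosList (n : ℕ) (π : ℕ → ℕ) : (pinPosList n π).SortedLT :=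
  Finset.sortedLT_sort _

section BlockReversal

variable {n : ℕ} {π : ℕ → ℕ} {a b : ℕ}

lemma pinAt_rev_iff (ha : 1 ≤ a) (hab : a < b)
    (hends : max (π (a - 1)) (π (b + 1)) < min (π a) (π b)) (i : ℕ) :
    PinAt (rev π a b) i ↔ PinAt π (reflect a b i) := by
  simp only [max_lt_iff, lt_min_iff] at hends
  simp only [PinAt, rev_eq_comp_reflect, Function.comp_apply, reflect]
  split_ifs <;> grind

lemma filter_pinAt_rev_eq_image_reflect (ha : 1 ≤ a) (hab : a < b) (hbn : b ≤ n)
    (hends : max (π (a - 1)) (π (b + 1)) < min (π a) (π b)) :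
    (Finset.Icc 1 n).filter (PinAt (rev π a b)) =
      ((Finset.Icc 1 n).filter (PinAt π)).image (reflect a b) := by
  ext i
  simp only [Finset.mem_filter, Finset.mem_image, Finset.mem_Icc, pinAt_rev_iff ha hab hends]
  constructor
  · rintro ⟨hi, hpin⟩
    exact ⟨reflect a b i, ⟨reflect_mem_Icc ha hbn hi, hpin⟩, reflect_involutive a b i⟩
  · rintro ⟨j, ⟨hj, hpin⟩, rfl⟩
    exact ⟨reflect_mem_Icc ha hbn hj, by rwa [reflect_involutive]⟩

lemma balancedRev_of_ends (ha : 1 ≤ a) (hab : a < b) (hbn : b ≤ n)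
    (hends : max (π (a - 1)) (π (b + 1)) < min (π a) (π b)) : BalancedRev n π a b := by
  have h := filter_pinAt_rev_eq_image_reflect ha hab hbn hends
  simp only [BalancedRev, pinFinset]
  change ((Finset.Icc 1 n).filter (PinAt (rev π a b))).image _ =
    ((Finset.Icc 1 n).filter (PinAt π)).image π
  rw [h, Finset.image_image, rev_eq_comp_reflect, Function.comp_assoc,
    (reflect_involutive a b).comp_self, Function.comp_id]

lemma pinList_rev_eq_reverseBlock (ha : 1 ≤ a) (hab : a < b) (hbn : b ≤ n)
    (hends : max (π (a - 1)) (π (b + 1)) < min (π a) (π b)) {k t : ℕ} (hkt : k ≤ t)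
    (hL : ∀ x ∈ (pinPosList n π).take k, x < a)
    (hM : ∀ x ∈ ((pinPosList n π).drop k).take (t - k), a ≤ x ∧ x ≤ b)
    (hR : ∀ x ∈ (pinPosList n π).drop t, b < x) :
    pinList n (rev π a b) = reverseBlock (pinList n π) k t := by
  set P := pinPosList n π
  set L := P.take k
  set M := (P.drop k).take (t - k)
  set R := P.drop t
  have hP : P = L ++ M ++ R := by
    have hMR : M ++ R = P.drop k := by
      rw [← List.take_append_drop (t - k) (P.drop k), List.drop_drop, Nat.add_sub_cancel' hkt]
    rw [List.append_assoc, hMR, List.take_append_drop]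
  have hpos : pinPosList n (rev π a b) = L ++ (M.map (reflect a b)).reverse ++ R := by
    change ((Finset.Icc 1 n).filter (PinAt (rev π a b))).sort (· ≤ ·) = _
    rw [filter_pinAt_rev_eq_image_reflect ha hab hbn hends,
      ← Finset.sort_toFinset (s := (Finset.Icc 1 n).filter (PinAt π)) (r := (· ≤ ·))]
    change (P.toFinset.image _).sort (· ≤ ·) = _
    rw [hP]
    exact sort_image_reflect hab.le (hP ▸ sortedLT_pinPosList n π) hL hM hR
  have hfixL : L.map (π ∘ reflect a b) = L.map π :=
    List.map_congr_left fun x hx => congrArg π (reflect_of_not_mem (by have := hL x hx; omega))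
  have hfixR : R.map (π ∘ reflect a b) = R.map π :=
    List.map_congr_left fun x hx => congrArg π (reflect_of_not_mem (by have := hR x hx; omega))
  rw [pinList, hpos, rev_eq_comp_reflect]
  simp only [List.map_append, List.map_reverse, List.map_map, hfixL, hfixR, Function.comp_assoc,
    (reflect_involutive a b).comp_self, Function.comp_id]
  simp only [reverseBlock, pinList, P, L, M, R, List.map_take, List.map_drop]

end BlockReversal

lemma exists_balancedRev_pinList_eq_reverseBlock {n : ℕ} {π : ℕ → ℕ} {k t : ℕ}
    (hk : 1 ≤ k) (hkt : k + 1 < t) (ht : t ≤ (pinList n π).length)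
    (hlow : (pinList n π).getD (k - 1) 0 < (pinList n π).getD (t - 1) 0)
    (hhigh : (pinList n π).getD (t - 1) 0 < (pinList n π).getD k 0) :
    ∃ a b, 1 ≤ a ∧ a < b ∧ b ≤ n ∧ BalancedRev n π a b ∧
      pinList n (rev π a b) = reverseBlock (pinList n π) k t := by
  set P := pinPosList n π
  have hPs : P.SortedLT := sortedLT_pinPosList n π
  have hlen : (pinList n π).length = P.length := List.length_map _
  have hget : ∀ i (hi : i < P.length), (pinList n π).getD i 0 = π P[i] := fun i hi => by
    rw [List.getD_eq_getElem _ _ (hlen ▸ hi)]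
    exact List.getElem_map _
  rw [hget _ (by omega), hget _ (by omega)] at hlow
  rw [hget _ (by omega), hget _ (by omega)] at hhigh
  have hPk : P[k - 1] ≤ P[k] := hPs.getElem_le_getElem_iff.2 (by omega)
  obtain ⟨a, hka, hak, ha1, ha⟩ := exists_crossing π hPk hlow hhigh.le
  obtain ⟨hb, -, hbpin⟩ := mem_pinPosList.1 (List.getElem_mem (show t - 1 < P.length by omega))
  set b := P[t - 1]
  have hkb : P[k] < b := hPs.getElem_lt_getElem_iff.2 (by omega)
  have hends : max (π (a - 1)) (π (b + 1)) < min (π a) (π b) := by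
    simp only [max_lt_iff, lt_min_iff]
    omega
  have hbn : b ≤ n := (Finset.mem_Icc.1 hb).2
  refine ⟨a, b, by omega, by omega, hbn, balancedRev_of_ends (by omega) (by omega) hbn hends,
    pinList_rev_eq_reverseBlock (by omega) (by omega) hbn hends (by omega) ?_ ?_ ?_⟩
  · exact fun x hx => (hPs.le_getElem_of_mem_take hx (i := k - 1) _ (by omega)).trans_lt hka
  · intro x hx
    have hxt : x ∈ P.take t := by
      rw [List.take_drop, Nat.add_sub_cancel' (by omega)] at hx
      exact List.mem_of_mem_drop hx
    exact ⟨hak.trans (hPs.getElem_le_of_mem_drop (List.mem_of_mem_take hx) _ le_rfl),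
      hPs.le_getElem_of_mem_take hxt _ (by omega)⟩
  · exact fun x hx => hPs.getElem_lt_of_mem_drop hx _ (by omega)

theorem statement13_general (n : ℕ) (π : ℕ → ℕ)
    (Y : List ℕ) (hY : Y = pinList n π) (p : ℕ) (hp : p = Y.length)
    (k t : ℕ) (hk : 1 ≤ k) (hkt : k < t) (htp : t ≤ p) (htk : t ≠ k + 1)
    (hlow : ∀ s s', 1 ≤ s → s ≤ k → s < s' → s' ≤ p →
      Y.getD (s - 1) 0 < Y.getD (s' - 1) 0)
    (hnext : ∀ s, k < s → s ≤ p → s ≠ t →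
      Y.getD (t - 1) 0 < Y.getD (s - 1) 0) :
    ∃ a b, 1 ≤ a ∧ a ≤ b ∧ b ≤ n ∧ BalancedRev n π a b ∧
      (pinList n (rev π a b)).getD k 0 = Y.getD (t - 1) 0 ∧
      ∀ s, (1 ≤ s ∧ s ≤ k) ∨ (t + 1 ≤ s ∧ s ≤ p) →
        (pinList n (rev π a b)).getD (s - 1) 0 = Y.getD (s - 1) 0 := by
  subst hY hp
  have hhigh := hnext (k + 1) (by omega) (by omega) (by omega)
  rw [Nat.add_sub_cancel] at hhigh
  obtain ⟨a, b, ha, hab, hbn, hbal, hrev⟩ := exists_balancedRev_pinList_eq_reverseBlock hk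
    (by omega) htp (hlow k t hk le_rfl hkt htp) hhigh
  refine ⟨a, b, ha, hab.le, hbn, hbal, ?_, fun s hs => ?_⟩
  · rw [hrev, getD_reverseBlock _ hkt.le htp, if_pos ⟨le_rfl, hkt⟩]
    congr 1
    omega
  · rw [hrev, getD_reverseBlock _ hkt.le htp, if_neg (by omega)]

/-- Lemma 4.2. Write the pinnacles of `π` from left to right as
`Y = [y_1, …, y_p]`. Assume `y_1, …, y_k` (`k ≥ 1`) are the `k` lowest pinnacles in
increasing order, and `y_t`, with `k < t ≤ p` and `t ≠ k + 1`, is the next lowest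
pinnacle. Then a single balanced reversal transforms `π` into a permutation whose
`(k+1)`-st pinnacle from the left is `y_t`, and which has the same pinnacles `y_s`
for `s ∈ {1, …, k} ∪ {t+1, …, p}`. -/
theorem statement13 (n : ℕ) (π : ℕ → ℕ) (hπ : IsExtPerm n π)
    (Y : List ℕ) (hY : Y = pinList n π) (p : ℕ) (hp : p = Y.length)
    (k t : ℕ) (hk : 1 ≤ k) (hkt : k < t) (htp : t ≤ p) (htk : t ≠ k + 1)
    (hlow : ∀ s s', 1 ≤ s → s ≤ k → s < s' → s' ≤ p →
      Y.getD (s - 1) 0 < Y.getD (s' - 1) 0)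
    (hnext : ∀ s, k < s → s ≤ p → s ≠ t →
      Y.getD (t - 1) 0 < Y.getD (s - 1) 0) :
    ∃ a b, 1 ≤ a ∧ a ≤ b ∧ b ≤ n ∧ BalancedRev n π a b ∧
      (pinList n (rev π a b)).getD k 0 = Y.getD (t - 1) 0 ∧
      ∀ s, (1 ≤ s ∧ s ≤ k) ∨ (t + 1 ≤ s ∧ s ≤ p) →
        (pinList n (rev π a b)).getD (s - 1) 0 = Y.getD (s - 1) 0 :=
  statement13_general n π Y hY p hp k t hk hkt htp htk hlow hnext
end
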